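/- arXiv:2107.12035 — 2 statements merged into one kernel-verified Lean document; each statement's English description precedes it below -/
import Mathlib

section
/- (Lemma giving inequality (2.8) = \eqref{uii}.) Let n ≥ 2, 2 ≤ k ≤ n, and let β_0,…,β_{k-2} be nonnegative real numbers. Define f(λ) = σ_k(λ)/σ_{k-1}(λ) − Σ_{l=0}^{k-2} β_l · σ_l(λ)/σ_{k-1}(λ) on Γ_{k-1}, and write f_i(λ) = ∂f/∂λ_i(λ). Then for all λ ∈ Γ_{k-1} and μ ∈ Γ_{k-1}: Σ_{i=1}^{n} f_i(λ) · μ_i ≥ f(μ) + Σ_{l=0}^{k-2} (k−l) · β_l · σ_l(λ)/σ_{k-1}(λ). -/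
/-- The `k`-th elementary symmetric function of a vector `lam ∈ ℝⁿ`. -/
noncomputable def esymm (n k : ℕ) (lam : Fin n → ℝ) : ℝ :=
  ∑ s ∈ Finset.powersetCard k (Finset.univ : Finset (Fin n)), ∏ i ∈ s, lam i

/-- The Gårding cone `Γ_k = {λ ∈ ℝⁿ : σ_j(λ) > 0 for all 1 ≤ j ≤ k}`. -/
def GammaCone (n k : ℕ) : Set (Fin n → ℝ) :=
  {lam | ∀ j : ℕ, 1 ≤ j → j ≤ k → 0 < esymm n j lam}

/-- The Krylov-type operator
`f(λ) = σ_k(λ)/σ_{k-1}(λ) − ∑_{l=0}^{k-2} β_l σ_l(λ)/σ_{k-1}(λ)`. -/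
noncomputable def krylovF (n k : ℕ) (β : ℕ → ℝ) (lam : Fin n → ℝ) : ℝ :=
  esymm n k lam / esymm n (k - 1) lam
    - ∑ l ∈ Finset.range (k - 1), β l * (esymm n l lam / esymm n (k - 1) lam)

/-!
Write `k = K + 1`. On the Gårding cone `Γ_K`, `σ_{K+1}/σ_K` is concave and every `σ_l/σ_K` with
`l ≤ K` is convex, so `f` is concave and `f(μ) - f(λ) ≤ Df(λ)(μ - λ)`. The terms of `f` are
homogeneous of degrees `1` and `l - K`, so Euler's identity gives
`Df(λ)λ = f(λ) + ∑ (k - l) β_l σ_l(λ)/σ_K(λ)`; adding the two gives the inequality.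

Concavity of `σ_{m+1}/σ_m` on `Γ_m` is proved by induction on `m` from the identity
`(m + 2) σ_{m+2} = σ₁ σ_{m+1} - ∑ᵢ xᵢ² σ_m(x|_{A∖i})` and the joint convexity of `u²/w`. The
induction also needs `Γ_{m+1}(A) ⊆ Γ_m(A ∖ {i})`, which rests on Newton's inequality
`σ_r σ_{r+2} ≤ σ_{r+1}²`, itself a consequence of Laguerre's inequality `p p'' ≤ p'²` for
real-rooted `p`. Convexity of `σ_l/σ_K` follows by writing it as
`exp (-∑_{l ≤ j < K} log (σ_{j+1}/σ_j))`.
-/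

open Finset Topology

section ElementarySymmetric

variable {ι R : Type*}

-- `esymm n j = esymmOn univ j`; the induction below runs over the faces `A \ {i}`.
def esymmOn [CommSemiring R] (A : Finset ι) (j : ℕ) (x : ι → R) : R :=
  ∑ s ∈ A.powersetCard j, ∏ i ∈ s, x i

section CommSemiring

variable [CommSemiring R] {A : Finset ι} {j : ℕ} {x y : ι → R}

@[simp]
lemma esymmOn_zero (A : Finset ι) (x : ι → R) : esymmOn A 0 x = 1 := by
  simp [esymmOn]

lemma esymmOn_one (A : Finset ι) (x : ι → R) : esymmOn A 1 x = ∑ i ∈ A, x i := by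
  simp [esymmOn, powersetCard_one]

lemma esymmOn_eq_zero_of_card_lt (h : #A < j) (x : ι → R) : esymmOn A j x = 0 := by
  rw [esymmOn, powersetCard_eq_empty.2 h, sum_empty]

lemma esymmOn_congr (h : ∀ i ∈ A, x i = y i) : esymmOn A j x = esymmOn A j y :=
  sum_congr rfl fun _ hs => prod_congr rfl fun i hi => h i ((mem_powersetCard.1 hs).1 hi)

lemma esymmOn_smul (A : Finset ι) (j : ℕ) (c : R) (x : ι → R) :
    esymmOn A j (c • x) = c ^ j * esymmOn A j x := by
  rw [esymmOn, esymmOn, mul_sum]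
  refine sum_congr rfl fun s hs => ?_
  simp [prod_mul_distrib, (mem_powersetCard.1 hs).2]

variable [DecidableEq ι]

lemma esymmOn_insert {i : ι} (hi : i ∉ A) (j : ℕ) (x : ι → R) :
    esymmOn (insert i A) (j + 1) x = esymmOn A (j + 1) x + x i * esymmOn A j x := by
  rw [esymmOn, powersetCard_succ_insert hi, sum_union, sum_image, esymmOn, esymmOn, mul_sum]
  · congr 1
    exact sum_congr rfl fun s hs =>
      prod_insert fun h => hi ((mem_powersetCard.1 hs).1 h)
  · intro s hs t ht hst
    have his : i ∉ s := fun h => hi ((mem_powersetCard.1 hs).1 h)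
    have hit : i ∉ t := fun h => hi ((mem_powersetCard.1 ht).1 h)
    simpa [erase_insert his, erase_insert hit] using congrArg (erase · i) hst
  · refine disjoint_left.2 fun s hs hs' => ?_
    obtain ⟨t, -, rfl⟩ := mem_image.1 hs'
    exact hi ((mem_powersetCard.1 hs).1 (mem_insert_self i t))

lemma esymmOn_erase {i : ι} (hi : i ∈ A) (j : ℕ) (x : ι → R) :
    esymmOn A (j + 1) x = esymmOn (A.erase i) (j + 1) x + x i * esymmOn (A.erase i) j x := by
  conv_lhs => rw [← insert_erase hi]
  exact esymmOn_insert (notMem_erase i A) j x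

lemma esymmOn_add_smul_single {i : ι} (hi : i ∈ A) (j : ℕ) (x : ι → R) (t : R) :
    esymmOn A (j + 1) (x + t • Pi.single i 1)
      = esymmOn A (j + 1) x + t * esymmOn (A.erase i) j x := by
  have hoff : ∀ j', esymmOn (A.erase i) j' (x + t • Pi.single i 1) = esymmOn (A.erase i) j' x :=
    fun _ => esymmOn_congr fun l hl => by simp [ne_of_mem_erase hl]
  rw [esymmOn_erase hi, esymmOn_erase hi j x, hoff, hoff]
  simp only [Pi.add_apply, Pi.smul_apply, Pi.single_eq_same, smul_eq_mul, mul_one]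
  ring

lemma sum_mul_esymmOn_erase (A : Finset ι) (j : ℕ) (x : ι → R) :
    ∑ i ∈ A, x i * esymmOn (A.erase i) j x = (j + 1) * esymmOn A (j + 1) x := by
  induction A using Finset.induction_on generalizing j with
  | empty => simp [esymmOn_eq_zero_of_card_lt (A := (∅ : Finset ι)) (Nat.succ_pos j)]
  | insert a A ha ih =>
    have herase : ∀ i ∈ A, (insert a A).erase i = insert a (A.erase i) := fun i hi =>
      erase_insert_of_ne fun h => ha (h ▸ hi)
    rw [sum_insert ha, erase_insert ha, sum_congr rfl fun i hi => by rw [herase i hi]]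
    cases j with
    | zero => simp [esymmOn_one, sum_insert ha]
    | succ j =>
      have hins : ∀ i ∈ A, esymmOn (insert a (A.erase i)) (j + 1) x
          = esymmOn (A.erase i) (j + 1) x + x a * esymmOn (A.erase i) j x := fun i hi =>
        esymmOn_insert (fun h => ha (mem_of_mem_erase h)) j x
      rw [sum_congr rfl fun i hi => by rw [hins i hi], esymmOn_insert ha]
      simp only [mul_add, sum_add_distrib, ih, mul_left_comm _ (x a), ← mul_sum]
      push_cast
      ring

end CommSemiring

lemma esymmOn_one_mul_sub_sum_sq [CommRing R] [DecidableEq ι] (A : Finset ι) (m : ℕ)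
    (x : ι → R) :
    esymmOn A 1 x * esymmOn A (m + 1) x - ∑ i ∈ A, x i ^ 2 * esymmOn (A.erase i) m x
      = (m + 2) * esymmOn A (m + 2) x := by
  have h := sum_mul_esymmOn_erase A (m + 1) x
  rw [sum_congr rfl fun i hi => by
    rw [eq_sub_of_add_eq (esymmOn_erase hi m x).symm, mul_sub, ← mul_assoc, ← sq]] at h
  rw [sum_sub_distrib, ← sum_mul, ← esymmOn_one] at h
  push_cast at h
  linear_combination h

lemma esymmOn_smul_div [Field R] (A : Finset ι) (j K : ℕ) {t : R} (ht : t ≠ 0) (x : ι → R) :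
    esymmOn A j (t • x) / esymmOn A K (t • x)
      = t ^ ((j : ℤ) - K) * (esymmOn A j x / esymmOn A K x) := by
  rw [esymmOn_smul, esymmOn_smul, mul_div_mul_comm, zpow_sub₀ ht, zpow_natCast, zpow_natCast]

end ElementarySymmetric

namespace Polynomial

lemma Splits.derivative_of_real {p : ℝ[X]} (hp : p.Splits) : (derivative p).Splits := by
  by_cases hdeg : p.natDegree = 0
  · rw [eq_C_of_natDegree_eq_zero hdeg, derivative_C]
    exact Splits.zero
  rw [splits_iff_card_roots] at hp ⊢
  have := card_roots_le_derivative p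
  have := card_roots' (derivative p)
  have := natDegree_derivative_lt hdeg
  omega

lemma Splits.iterate_derivative_of_real {p : ℝ[X]} (hp : p.Splits) (d : ℕ) :
    (derivative^[d] p).Splits := by
  induction d with
  | zero => exact hp
  | succ d ih => rw [Function.iterate_succ_apply']; exact ih.derivative_of_real

lemma eval_derivative_derivative_mul_eval_prod_X_sub_C_le (s : Multiset ℝ) (t : ℝ) :
    eval t (derivative (derivative (s.map (X - C ·)).prod)) * eval t (s.map (X - C ·)).prod
      ≤ eval t (derivative (s.map (X - C ·)).prod) ^ 2 := by
  induction s using Multiset.induction with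
  | empty => simp
  | cons a s ih =>
    rw [Multiset.map_cons, Multiset.prod_cons]
    set g := (s.map (X - C ·)).prod
    have hg' : derivative ((X - C a) * g) = g + (X - C a) * derivative g := by
      simp [derivative_mul]
    have hg'' : derivative (derivative ((X - C a) * g))
        = 2 * derivative g + (X - C a) * derivative (derivative g) := by
      rw [hg', derivative_add, derivative_mul]
      simp only [derivative_sub, derivative_X, derivative_C, sub_zero, one_mul]
      ring
    rw [hg'', hg']
    simp only [eval_add, eval_mul, eval_sub, eval_X, eval_C, eval_ofNat]
    nlinarith [mul_le_mul_of_nonneg_left ih (sq_nonneg (t - a)), sq_nonneg (eval t g)]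

lemma Splits.eval_derivative_derivative_mul_eval_le {p : ℝ[X]} (hp : p.Splits) (t : ℝ) :
    eval t (derivative (derivative p)) * eval t p ≤ eval t (derivative p) ^ 2 := by
  rw [hp.eq_prod_roots]
  simp only [derivative_C_mul, eval_mul, eval_C]
  nlinarith [mul_le_mul_of_nonneg_left (eval_derivative_derivative_mul_eval_prod_X_sub_C_le
    p.roots t) (sq_nonneg p.leadingCoeff)]

end Polynomial

lemma Nat.descFactorial_succ_sq_le (d : ℕ) :
    (d + 1).descFactorial d ^ 2 ≤ 2 * d.descFactorial d * (d + 2).descFactorial d := by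
  have h1 := Nat.succ_descFactorial d d
  have h2 := Nat.succ_descFactorial (d + 1) d
  rw [show d + 1 - d = 1 by omega, one_mul] at h1
  rw [show d + 1 + 1 - d = 2 by omega] at h2
  nlinarith

open Polynomial in
/-- Laguerre's inequality at `0` for the `d`-th derivative of `∏ (X + xᵢ)`, whose coefficients
of degree `0, 1, 2` are positive multiples of `σ_{r+2}, σ_{r+1}, σ_r`. -/
lemma esymmOn_mul_esymmOn_add_two_le_sq {ι : Type*} (A : Finset ι) (r : ℕ) (x : ι → ℝ) :
    esymmOn A r x * esymmOn A (r + 2) x ≤ esymmOn A (r + 1) x ^ 2 := by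
  classical
  rcases lt_or_ge #A (r + 2) with hA | hA
  · rw [esymmOn_eq_zero_of_card_lt hA, mul_zero]
    positivity
  obtain ⟨d, hd⟩ : ∃ d, #A = d + (r + 2) := ⟨#A - (r + 2), by omega⟩
  set P : ℝ[X] := ∏ i ∈ A, (X + C (x i))
  have hP : P.Splits := Splits.prod fun i _ => Splits.X_add_C (x i)
  have hcoeff : ∀ j ≤ 2, (derivative^[d] P).coeff j
      = ((d + j).descFactorial d : ℝ) * esymmOn A (r + 2 - j) x := by
    intro j hj
    rw [coeff_iterate_derivative, nsmul_eq_mul, Finset.prod_X_add_C_coeff _ _ (by omega), hd,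
      add_comm j d]
    congr 3
    omega
  have key := (hP.iterate_derivative_of_real d).eval_derivative_derivative_mul_eval_le 0
  simp only [← coeff_zero_eq_eval_zero, coeff_derivative, hcoeff 0 (by norm_num),
    hcoeff 1 one_le_two, hcoeff 2 le_rfl, add_zero, Nat.add_sub_cancel, Nat.sub_zero,
    show r + 2 - 1 = r + 1 by omega] at key
  have hc : ((d + 1).descFactorial d : ℝ) ^ 2 ≤ 2 * d.descFactorial d * (d + 2).descFactorial d :=
    mod_cast Nat.descFactorial_succ_sq_le d
  have hc₁ : (0 : ℝ) < (d + 1).descFactorial d := by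
    exact_mod_cast Nat.descFactorial_pos.2 d.le_succ
  push_cast at key
  by_contra! h
  have hX : 0 < esymmOn A r x * esymmOn A (r + 2) x := (sq_nonneg _).trans_lt h
  nlinarith [mul_le_mul_of_nonneg_right hc hX.le, mul_lt_mul_of_pos_left h (pow_pos hc₁ 2)]

lemma ConvexOn.finset_sum {𝕜 E β α : Type*} [Semiring 𝕜] [PartialOrder 𝕜] [AddCommMonoid E]
    [AddCommMonoid β] [PartialOrder β] [IsOrderedAddMonoid β] [SMul 𝕜 E] [Module 𝕜 β]
    {s : Set E} (hs : Convex 𝕜 s) (t : Finset α) {f : α → E → β}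
    (hf : ∀ a ∈ t, ConvexOn 𝕜 s (f a)) : ConvexOn 𝕜 s (fun x => ∑ a ∈ t, f a x) := by
  classical
  induction t using Finset.induction_on with
  | empty => simpa using convexOn_const 0 hs
  | insert a t ha ih =>
    simp only [sum_insert ha]
    exact (hf a (mem_insert_self a t)).add (ih fun b hb => hf b (mem_insert_of_mem hb))

section RealValued

variable {E : Type*} [AddCommMonoid E] [Module ℝ E] {s : Set E} {f : E → ℝ}

lemma ConvexOn.exp (hf : ConvexOn ℝ s f) : ConvexOn ℝ s (fun x => Real.exp (f x)) := by
  refine ⟨hf.1, fun x hx y hy a b ha hb hab => ?_⟩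
  calc Real.exp (f (a • x + b • y)) ≤ Real.exp (a • f x + b • f y) :=
        Real.exp_le_exp.2 (hf.2 hx hy ha hb hab)
    _ ≤ a • Real.exp (f x) + b • Real.exp (f y) :=
        convexOn_exp.2 (Set.mem_univ _) (Set.mem_univ _) ha hb hab

lemma ConcaveOn.log (hf : ConcaveOn ℝ s f) (hpos : ∀ x ∈ s, 0 < f x) :
    ConcaveOn ℝ s (fun x => Real.log (f x)) := by
  refine ⟨hf.1, fun x hx y hy a b ha hb hab => ?_⟩
  calc a • Real.log (f x) + b • Real.log (f y) ≤ Real.log (a • f x + b • f y) :=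
        strictConcaveOn_log_Ioi.concaveOn.2 (hpos x hx) (hpos y hy) ha hb hab
    _ ≤ Real.log (f (a • x + b • y)) :=
        Real.log_le_log (convex_Ioi (0 : ℝ) (hpos x hx) (hpos y hy) ha hb hab)
          (hf.2 hx hy ha hb hab)

/-- `(u, w) ↦ u² / w` is jointly convex on `w > 0` and decreasing in `w`. -/
lemma ConcaveOn.convexOn_sq_div {w : E → ℝ} (hw : ConcaveOn ℝ s w) (hpos : ∀ x ∈ s, 0 < w x)
    (u : E →ₗ[ℝ] ℝ) : ConvexOn ℝ s (fun x => u x ^ 2 / w x) := by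
  refine ⟨hw.1, fun x hx y hy a b ha hb hab => ?_⟩
  have hx' := hpos x hx
  have hy' := hpos y hy
  have hW : 0 < a * w x + b * w y := convex_Ioi (0 : ℝ) hx' hy' ha hb hab
  have hw' : a * w x + b * w y ≤ w (a • x + b • y) := hw.2 hx hy ha hb hab
  simp only [map_add, map_smul, smul_eq_mul]
  calc (a * u x + b * u y) ^ 2 / w (a • x + b • y)
      ≤ (a * u x + b * u y) ^ 2 / (a * w x + b * w y) :=
        div_le_div_of_nonneg_left (sq_nonneg _) hW hw'
    _ ≤ a * (u x ^ 2 / w x) + b * (u y ^ 2 / w y) := by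
        rw [div_le_iff₀ hW, ← sub_nonneg]
        have : (a * (u x ^ 2 / w x) + b * (u y ^ 2 / w y)) * (a * w x + b * w y)
            - (a * u x + b * u y) ^ 2 = a * b * (u x * w y - u y * w x) ^ 2 / (w x * w y) := by
          field_simp
          ring
        rw [this]
        positivity

end RealValued

section Differentiable

variable {E : Type*} [NormedAddCommGroup E] [NormedSpace ℝ E]

lemma ConcaveOn.sub_le_fderiv_sub {s : Set E} {g : E → ℝ} (hg : ConcaveOn ℝ s g) {x y : E}
    (hx : x ∈ s) (hy : y ∈ s) (hd : DifferentiableAt ℝ g x) :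
    g y - g x ≤ fderiv ℝ g x (y - x) := by
  have hline : HasDerivAt (g ∘ AffineMap.lineMap (k := ℝ) x y) (fderiv ℝ g x (y - x)) 0 := by
    have hd' : HasFDerivAt g (fderiv ℝ g x) (AffineMap.lineMap (k := ℝ) x y 0) := by
      simpa using hd.hasFDerivAt
    exact hd'.comp_hasDerivAt 0 AffineMap.hasDerivAt_lineMap
  have := (hg.comp_affineMap (AffineMap.lineMap (k := ℝ) x y)).slope_le_of_hasDerivAt
    (x := 0) (y := 1) (by simpa using hx) (by simpa using hy) zero_lt_one hline
  simpa [slope_def_field] using this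

lemma fderiv_apply_self_eq_of_eventually_smul {g : E → ℝ} {x : E} {φ : ℝ → ℝ} {φ' : ℝ}
    (hg : DifferentiableAt ℝ g x) (hφ : HasDerivAt φ φ' 1)
    (h : ∀ᶠ t in 𝓝 1, g (t • x) = φ t) : fderiv ℝ g x x = φ' := by
  have hg' : HasFDerivAt g (fderiv ℝ g x) ((1 : ℝ) • x) := by simpa using hg.hasFDerivAt
  have hray : HasDerivAt (fun t : ℝ => g (t • x)) (fderiv ℝ g x x) 1 := by
    have hsmul : HasDerivAt (fun t : ℝ => t • x) x 1 := by
      simpa using (hasDerivAt_id (1 : ℝ)).smul_const x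
    exact hg'.comp_hasDerivAt (1 : ℝ) hsmul
  exact hray.unique (hφ.congr_of_eventuallyEq h)

end Differentiable

section GardingCone

variable {ι : Type*} {A : Finset ι} {m j : ℕ} {x : ι → ℝ}

def gardingCone (A : Finset ι) (m : ℕ) : Set (ι → ℝ) :=
  {x | ∀ j, 1 ≤ j → j ≤ m → 0 < esymmOn A j x}

lemma gardingCone_zero (A : Finset ι) : gardingCone A 0 = Set.univ :=
  Set.eq_univ_of_forall fun _ j h1 h2 => absurd (h1.trans h2) (by omega)

lemma gardingCone_subset_gardingCone {m' : ℕ} (h : m' ≤ m) :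
    gardingCone A m ⊆ gardingCone A m' :=
  fun _ hx j h1 h2 => hx j h1 (h2.trans h)

lemma esymmOn_pos_of_mem_gardingCone (hx : x ∈ gardingCone A m) (hj : j ≤ m) :
    0 < esymmOn A j x := by
  rcases j.eq_zero_or_pos with rfl | hj0
  · simp
  · exact hx j hj0 hj

lemma le_card_of_mem_gardingCone (hx : x ∈ gardingCone A m) : m ≤ #A := by
  by_contra h
  have := esymmOn_pos_of_mem_gardingCone hx le_rfl
  rw [esymmOn_eq_zero_of_card_lt (by omega)] at this
  exact lt_irrefl 0 this

lemma smul_mem_gardingCone {c : ℝ} (hc : 0 < c) (hx : x ∈ gardingCone A m) :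
    c • x ∈ gardingCone A m := fun j h1 h2 => by
  rw [esymmOn_smul]
  exact mul_pos (pow_pos hc j) (hx j h1 h2)

lemma mem_gardingCone_of_pos (hx : ∀ i ∈ A, 0 < x i) (hm : m ≤ #A) : x ∈ gardingCone A m :=
  fun _ _ hj => sum_pos (fun _ hs => prod_pos fun i hi => hx i ((mem_powersetCard.1 hs).1 hi))
    (powersetCard_nonempty.2 (hj.trans hm))

lemma gardingCone_succ (A : Finset ι) (m : ℕ) : gardingCone A (m + 1)
    = {x ∈ gardingCone A m | 0 < esymmOn A (m + 1) x / esymmOn A m x} := by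
  ext x
  refine ⟨fun hx => ⟨gardingCone_subset_gardingCone m.le_succ hx, div_pos (hx _ m.succ_pos le_rfl)
    (esymmOn_pos_of_mem_gardingCone hx m.le_succ)⟩, fun ⟨hx, hq⟩ j h1 h2 => ?_⟩
  rcases h2.lt_or_eq with h2 | rfl
  · exact hx j h1 (Nat.lt_succ_iff.1 h2)
  · exact (div_pos_iff_of_pos_right (esymmOn_pos_of_mem_gardingCone hx le_rfl)).1 hq

lemma continuous_esymmOn (A : Finset ι) (j : ℕ) : Continuous (esymmOn A j : (ι → ℝ) → ℝ) := by
  unfold esymmOn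
  fun_prop

lemma differentiable_esymmOn [Fintype ι] (A : Finset ι) (j : ℕ) :
    Differentiable ℝ (esymmOn A j : (ι → ℝ) → ℝ) := by
  unfold esymmOn
  fun_prop

lemma esymmOn_nonneg_of_mem_closure (hx : x ∈ closure (gardingCone A m)) (hj : j ≤ m) :
    0 ≤ esymmOn A j x :=
  closure_minimal (fun _ hy => (esymmOn_pos_of_mem_gardingCone hy hj).le)
    (isClosed_le continuous_const (continuous_esymmOn A j)) hx

/-- `x + t eᵢ` is the limit as `δ → 0⁺` of `½ (2x) + ½ (2t (eᵢ + δ 𝟙))`. -/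
lemma add_smul_single_mem_closure_gardingCone [DecidableEq ι] (hC : Convex ℝ (gardingCone A m))
    (hx : x ∈ gardingCone A m) (i : ι) {t : ℝ} (ht : 0 < t) :
    x + t • Pi.single i 1 ∈ closure (gardingCone A m) := by
  have hmem : ∀ δ : ℝ, 0 < δ → x + t • (Pi.single i 1 + δ • 1) ∈ gardingCone A m := by
    intro δ hδ
    have hv : Pi.single i 1 + δ • 1 ∈ gardingCone A m := by
      refine mem_gardingCone_of_pos (fun l _ => ?_) (le_card_of_mem_gardingCone hx)
      by_cases hl : l = i <;> simp [hl] <;> positivity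
    have := hC (smul_mem_gardingCone two_pos hx)
      (smul_mem_gardingCone (by positivity : (0 : ℝ) < 2 * t) hv)
      (by norm_num : (0 : ℝ) ≤ 1 / 2) (by norm_num : (0 : ℝ) ≤ 1 / 2) (by norm_num)
    convert this using 1
    module
  have hlim : Filter.Tendsto (fun δ : ℝ => x + t • (Pi.single i 1 + δ • 1)) (𝓝[>] 0)
      (𝓝 (x + t • Pi.single i 1)) := by
    exact (Continuous.tendsto' (by fun_prop) 0 _ (by simp)).mono_left nhdsWithin_le_nhds
  exact mem_closure_of_tendsto hlim (eventually_nhdsWithin_of_forall hmem)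

end GardingCone

section GardingInduction

variable {ι : Type*} [DecidableEq ι] {A : Finset ι} {m : ℕ} {x : ι → ℝ} {i : ι}

lemma esymmOn_erase_nonneg_of_mem_gardingCone (hC : Convex ℝ (gardingCone A (m + 1)))
    (hx : x ∈ gardingCone A (m + 1)) (hi : i ∈ A) : 0 ≤ esymmOn (A.erase i) m x := by
  by_contra! hneg
  set t := (esymmOn A (m + 1) x + 1) / -esymmOn (A.erase i) m x
  have ht : 0 < t := div_pos (by linarith [hx (m + 1) m.succ_pos le_rfl]) (by linarith)
  have h := esymmOn_nonneg_of_mem_closure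
    (add_smul_single_mem_closure_gardingCone hC hx i ht) le_rfl
  rw [esymmOn_add_smul_single hi, div_mul_eq_mul_div, div_neg, mul_div_cancel_right₀ _ hneg.ne] at h
  linarith

/-- The weak Newton inequality `σ_r σ_{r+2} ≤ σ_{r+1}²` on `A \ {i}` excludes
`σ_{r+1}(x|_{A∖i}) = 0`, since that would force `σ_{r+2}(x) = σ_{r+2}(x|_{A∖i}) ≤ 0`. -/
lemma esymmOn_erase_pos_of_mem_gardingCone {r : ℕ} (hC : Convex ℝ (gardingCone A (r + 2)))
    (hx : x ∈ gardingCone A (r + 2)) (hi : i ∈ A) (hprev : 0 < esymmOn (A.erase i) r x) :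
    0 < esymmOn (A.erase i) (r + 1) x := by
  refine (esymmOn_erase_nonneg_of_mem_gardingCone hC hx hi).lt_of_ne fun hzero => ?_
  have hnewton := esymmOn_mul_esymmOn_add_two_le_sq (A.erase i) r x
  have htop := esymmOn_erase hi (r + 1) x
  rw [← hzero] at hnewton htop
  have : esymmOn (A.erase i) (r + 2) x ≤ 0 := by nlinarith
  linarith [hx (r + 2) (by omega) le_rfl]

lemma gardingCone_succ_subset_erase (hC : Convex ℝ (gardingCone A (m + 1)))
    (hR : gardingCone A m ⊆ gardingCone (A.erase i) (m - 1)) (hi : i ∈ A) :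
    gardingCone A (m + 1) ⊆ gardingCone (A.erase i) m := by
  intro x hx j h1 h2
  have hxR := hR (gardingCone_subset_gardingCone m.le_succ hx)
  obtain ⟨r, rfl⟩ : ∃ r, m = r + 1 := ⟨m - 1, by omega⟩
  rcases h2.lt_or_eq with h2 | rfl
  · exact hxR j h1 (by omega)
  · exact esymmOn_erase_pos_of_mem_gardingCone hC hx hi
      (esymmOn_pos_of_mem_gardingCone hxR le_rfl)

/-- On `Γ_{m+1}`, `(m + 2) σ_{m+2} / σ_{m+1} = σ₁ - ∑ᵢ xᵢ² / wᵢ` with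
`wᵢ = σ_{m+1} / σ_m(x|_{A∖i}) = xᵢ + σ_{m+1}(x|_{A∖i}) / σ_m(x|_{A∖i})`, which is concave by the
inductive hypothesis on `A \ {i}`. -/
lemma concaveOn_esymmOn_div_of_erase
    (hQ : ∀ i ∈ A, ConcaveOn ℝ (gardingCone (A.erase i) m)
      (fun x => esymmOn (A.erase i) (m + 1) x / esymmOn (A.erase i) m x))
    (hC : Convex ℝ (gardingCone A (m + 1)))
    (hR : ∀ i ∈ A, gardingCone A (m + 1) ⊆ gardingCone (A.erase i) m) :
    ConcaveOn ℝ (gardingCone A (m + 1)) (fun x => esymmOn A (m + 2) x / esymmOn A (m + 1) x) := by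
  set w : ι → (ι → ℝ) → ℝ := fun i x => esymmOn A (m + 1) x / esymmOn (A.erase i) m x
  have hw_pos : ∀ i ∈ A, ∀ x ∈ gardingCone A (m + 1), 0 < w i x := fun i hi x hx =>
    div_pos (hx _ m.succ_pos le_rfl) (esymmOn_pos_of_mem_gardingCone (hR i hi hx) le_rfl)
  have hw : ∀ i ∈ A, ConcaveOn ℝ (gardingCone A (m + 1)) (w i) := by
    intro i hi
    refine (((LinearMap.proj i).concaveOn hC).add ((hQ i hi).subset (hR i hi) hC)).congr
      fun x hx => ?_
    have := (esymmOn_pos_of_mem_gardingCone (hR i hi hx) le_rfl).ne'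
    simp only [Pi.add_apply, LinearMap.coe_proj, Function.eval, w, esymmOn_erase hi m x]
    field_simp
    ring
  have hsum : ConvexOn ℝ (gardingCone A (m + 1)) (fun x => ∑ i ∈ A, (x i ^ 2 / w i x - x i)) :=
    ConvexOn.finset_sum hC A fun i hi =>
      ((hw i hi).convexOn_sq_div (hw_pos i hi) (LinearMap.proj i)).sub
        ((LinearMap.proj i).concaveOn hC)
  refine (hsum.smul (by positivity : (0 : ℝ) ≤ ((m : ℝ) + 2)⁻¹)).neg.congr fun x hx => ?_
  have h1 : esymmOn A (m + 1) x ≠ 0 := (hx _ m.succ_pos le_rfl).ne'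
  have key := esymmOn_one_mul_sub_sum_sq A m x
  change -(((m : ℝ) + 2)⁻¹ * ∑ i ∈ A, (x i ^ 2 / w i x - x i)) = _
  rw [sum_sub_distrib, ← esymmOn_one A x]
  simp only [w, div_div_eq_mul_div]
  rw [← sum_div]
  field_simp
  linear_combination key

end GardingInduction

section GardingConvexity

variable {ι : Type*}

/-- A joint induction: concavity at level `m + 1` on `A` needs concavity at level `m` on the faces
`A \ {i}` together with `Γ_{m+1}(A) ⊆ Γ_m(A \ {i})`. -/
theorem concaveOn_esymmOn_succ_div_and_subset_erase [DecidableEq ι] (m : ℕ) (A : Finset ι) :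
    ConcaveOn ℝ (gardingCone A m) (fun x => esymmOn A (m + 1) x / esymmOn A m x)
      ∧ ∀ i ∈ A, gardingCone A m ⊆ gardingCone (A.erase i) (m - 1) := by
  induction m generalizing A with
  | zero =>
    refine ⟨⟨by simp [gardingCone_zero, convex_univ], fun x _ y _ a b _ _ _ => ?_⟩,
      fun i _ => by simp [gardingCone_zero]⟩
    simp [esymmOn_one, sum_add_distrib, mul_sum]
  | succ m ih =>
    have hC := ((gardingCone_succ A m).symm ▸ (ih A).1.convex_gt 0 : Convex ℝ _)
    have hR : ∀ i ∈ A, gardingCone A (m + 1) ⊆ gardingCone (A.erase i) m :=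
      fun i hi => gardingCone_succ_subset_erase hC ((ih A).2 i hi) hi
    exact ⟨concaveOn_esymmOn_div_of_erase (fun i _ => (ih (A.erase i)).1) hC hR, hR⟩

lemma concaveOn_esymmOn_succ_div (A : Finset ι) (m : ℕ) :
    ConcaveOn ℝ (gardingCone A m) (fun x => esymmOn A (m + 1) x / esymmOn A m x) := by
  classical
  exact (concaveOn_esymmOn_succ_div_and_subset_erase m A).1

lemma convex_gardingCone (A : Finset ι) (m : ℕ) : Convex ℝ (gardingCone A m) :=
  (concaveOn_esymmOn_succ_div A m).1

lemma convexOn_esymmOn_div {A : Finset ι} {l K : ℕ} (hlK : l ≤ K) :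
    ConvexOn ℝ (gardingCone A K) (fun x => esymmOn A l x / esymmOn A K x) := by
  have hC := convex_gardingCone A K
  have hlog : ConvexOn ℝ (gardingCone A K)
      (fun x => ∑ j ∈ Ico l K, -Real.log (esymmOn A (j + 1) x / esymmOn A j x)) := by
    refine ConvexOn.finset_sum hC _ fun j hj => neg_convexOn_iff.2 ?_
    have hsub := gardingCone_subset_gardingCone (A := A) (mem_Ico.1 hj).2.le
    refine ((concaveOn_esymmOn_succ_div A j).subset hsub hC).log fun x hx => ?_
    exact div_pos (esymmOn_pos_of_mem_gardingCone hx (mem_Ico.1 hj).2)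
      (esymmOn_pos_of_mem_gardingCone (hsub hx) le_rfl)
  refine hlog.exp.congr fun x hx => ?_
  have hpos : ∀ j ≤ K, esymmOn A j x ≠ 0 := fun j hj => (esymmOn_pos_of_mem_gardingCone hx hj).ne'
  have htel : ∑ j ∈ Ico l K, -Real.log (esymmOn A (j + 1) x / esymmOn A j x)
      = Real.log (esymmOn A l x) - Real.log (esymmOn A K x) := by
    rw [sum_congr rfl fun j hj => by
      rw [Real.log_div (hpos _ (mem_Ico.1 hj).2) (hpos _ (mem_Ico.1 hj).2.le)]]
    rw [sum_neg_distrib, sum_Ico_sub (fun j => Real.log (esymmOn A j x)) hlK, neg_sub]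
  dsimp only
  rw [htel, Real.exp_sub, Real.exp_log (esymmOn_pos_of_mem_gardingCone hx hlK),
    Real.exp_log (esymmOn_pos_of_mem_gardingCone hx le_rfl)]

end GardingConvexity

lemma ContinuousLinearMap.sum_apply_single_mul {ι : Type*} [Fintype ι] [DecidableEq ι]
    (L : (ι → ℝ) →L[ℝ] ℝ) (y : ι → ℝ) : ∑ i, L (Pi.single i 1) * y i = L y := by
  conv_rhs => rw [← Finset.univ_sum_single y]
  simp only [map_sum]
  refine sum_congr rfl fun i _ => ?_
  rw [mul_comm, ← smul_eq_mul, ← map_smul, ← Pi.single_smul', smul_eq_mul, mul_one]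

section Krylov

variable {n K : ℕ} {β : ℕ → ℝ} {x : Fin n → ℝ}

lemma krylovF_succ (n K : ℕ) (β : ℕ → ℝ) : krylovF n (K + 1) β = fun x =>
    esymmOn univ (K + 1) x / esymmOn univ K x
      - ∑ l ∈ range K, β l * (esymmOn univ l x / esymmOn univ K x) :=
  rfl

lemma concaveOn_krylovF (hβ : ∀ l < K, 0 ≤ β l) :
    ConcaveOn ℝ (GammaCone n K) (krylovF n (K + 1) β) := by
  rw [krylovF_succ]
  exact (concaveOn_esymmOn_succ_div univ K).sub <| ConvexOn.finset_sum (convex_gardingCone univ K)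
    _ fun l hl => (convexOn_esymmOn_div (mem_range.1 hl).le).smul (hβ l (mem_range.1 hl))

lemma differentiableAt_krylovF (hx : x ∈ GammaCone n K) :
    DifferentiableAt ℝ (krylovF n (K + 1) β) x := by
  have hK := (esymmOn_pos_of_mem_gardingCone hx le_rfl).ne'
  have := differentiable_esymmOn (univ : Finset (Fin n))
  rw [krylovF_succ]
  fun_prop (disch := exact hK)

lemma fderiv_krylovF_apply_self (hx : x ∈ GammaCone n K) :
    fderiv ℝ (krylovF n (K + 1) β) x x = krylovF n (K + 1) β x
      + ∑ l ∈ range K, (((K + 1 : ℕ) : ℝ) - l) * β l * (esymm n l x / esymm n K x) := by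
  set b : ℕ → ℝ := fun j => esymmOn univ j x / esymmOn univ K x
  have hφ : HasDerivAt (fun t : ℝ => t * b (K + 1) - ∑ l ∈ range K, β l * (t ^ ((l : ℤ) - K) * b l))
      (b (K + 1) - ∑ l ∈ range K, β l * (((l : ℤ) - K : ℤ) * b l)) 1 := by
    refine ((hasDerivAt_id' 1).mul_const _ |>.congr_deriv (one_mul _)).sub
      (HasDerivAt.fun_sum fun l _ => ?_)
    simpa using ((hasDerivAt_zpow ((l : ℤ) - K) 1 (Or.inl one_ne_zero)).mul_const (b l)).const_mul
      (β l)
  rw [fderiv_apply_self_eq_of_eventually_smul (differentiableAt_krylovF hx) hφ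
    ((eventually_ne_nhds one_ne_zero).mono fun t ht => ?_)]
  · change _ = b (K + 1) - ∑ l ∈ range K, β l * b l
      + ∑ l ∈ range K, (((K + 1 : ℕ) : ℝ) - l) * β l * b l
    rw [sub_add, ← sum_sub_distrib]
    congr 1
    refine sum_congr rfl fun l _ => ?_
    push_cast
    ring
  · simp only [krylovF_succ, esymmOn_smul_div _ _ _ ht]
    rw [show ((K + 1 : ℕ) : ℤ) - K = 1 by push_cast; ring, zpow_one]

end Krylov

theorem krylovF_lower_bound_general (n k : ℕ) (hk : 2 ≤ k)
    (β : ℕ → ℝ) (hβ : ∀ l ≤ k - 2, 0 ≤ β l)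
    (lam mu : Fin n → ℝ) (hlam : lam ∈ GammaCone n (k - 1))
    (hmu : mu ∈ GammaCone n (k - 1)) :
    ∑ i : Fin n, fderiv ℝ (krylovF n k β) lam (Pi.single i 1) * mu i
      ≥ krylovF n k β mu
        + ∑ l ∈ Finset.range (k - 1),
            ((k : ℝ) - (l : ℝ)) * β l * (esymm n l lam / esymm n (k - 1) lam) := by
  obtain ⟨K, rfl⟩ : ∃ K, k = K + 1 := ⟨k - 1, by omega⟩
  rw [Nat.add_sub_cancel] at hlam hmu ⊢
  have hgrad := (concaveOn_krylovF fun l hl => hβ l (by omega)).sub_le_fderiv_sub hlam hmu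
    (differentiableAt_krylovF hlam)
  rw [map_sub, fderiv_krylovF_apply_self hlam] at hgrad
  rw [ContinuousLinearMap.sum_apply_single_mul]
  linarith

/-- Inequality (2.8): for `λ, μ ∈ Γ_{k-1}` and nonnegative `β_0, …, β_{k-2}`,
`∑ᵢ fᵢ(λ) μᵢ ≥ f(μ) + ∑_{l=0}^{k-2} (k−l) β_l σ_l(λ)/σ_{k-1}(λ)`. -/
theorem krylovF_lower_bound (n k : ℕ) (hn : 2 ≤ n) (hk : 2 ≤ k) (hkn : k ≤ n)
    (β : ℕ → ℝ) (hβ : ∀ l ≤ k - 2, 0 ≤ β l)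
    (lam mu : Fin n → ℝ) (hlam : lam ∈ GammaCone n (k - 1))
    (hmu : mu ∈ GammaCone n (k - 1)) :
    ∑ i : Fin n, fderiv ℝ (krylovF n k β) lam (Pi.single i 1) * mu i
      ≥ krylovF n k β mu
        + ∑ l ∈ Finset.range (k - 1),
            ((k : ℝ) - (l : ℝ)) * β l * (esymm n l lam / esymm n (k - 1) lam) :=
  krylovF_lower_bound_general n k hk β hβ lam mu hlam hmu
end

section
/- (Lemma 2.13, inequality (2.9).) Let n ≥ 2 and 2 ≤ k ≤ n. There exists a constant C > 0, depending only on n and k, with the following property: if λ ∈ Γ_{k-1}, β_0,…,β_{k-2} are nonnegative real numbers and β_{k-1} ∈ ℝ satisfy σ_k(λ)/σ_{k-1}(λ) = Σ_{l=0}^{k-2} β_l · σ_l(λ)/σ_{k-1}(λ) + β_{k-1}, then for every l with 0 ≤ l ≤ k−2 and β_l > 0 one has 0 < σ_l(λ)/σ_{k-1}(λ) ≤ max{ (1 + |β_{k-1}|)/β_l , C }. -/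
/-!
If `σ_k ≤ σ_{k-1}`, all terms of the sum are nonnegative on `Γ_{k-1}`, so the equation gives
`β_l σ_l / σ_{k-1} ≤ σ_k / σ_{k-1} - β_{k-1} ≤ 1 + |β_{k-1}|`.

Otherwise `σ_k > σ_{k-1} > 0`. Newton's inequalities `E_j E_{j+2} ≤ E_{j+1}²` for the normalized
functions `E_j = σ_j / C(n, j)` make `E_j / E_{j+1}` nondecreasing in `j`, hence
`E_l / E_{k-1} ≤ (E_{k-1} / E_k) ^ (k-1-l)`, and `E_{k-1} / E_k ≤ C(n, k)` because `σ_{k-1} < σ_k`.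

Newton's inequalities are proved by induction on `n`: by Rolle's theorem the derivative of
`∏ (X - λ_i)` has `n - 1` real roots, and these have the same `E_j` for `j < n`. This goes down to
`n = j + 2`, where `σ_{n-1} = ∑ a_i` and `σ_{n-2} σ_n = e_2(a)` for `a_i = ∏_{t ≠ i} λ_t`, so
the inequality is Cauchy–Schwarz for `a`.
-/

open Finset

namespace Multiset

theorem esymm_cons_succ {R : Type*} [CommSemiring R] (a : R) (s : Multiset R) (k : ℕ) :
    (a ::ₘ s).esymm (k + 1) = s.esymm (k + 1) + a * s.esymm k := by
  simp [esymm, powersetCard_cons, sum_map_mul_left]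

theorem esymm_one {R : Type*} [CommSemiring R] (s : Multiset R) : s.esymm 1 = s.sum := by
  simp [esymm, powersetCard_one]

theorem two_mul_esymm_two {R : Type*} [CommRing R] (s : Multiset R) :
    2 * s.esymm 2 = s.sum ^ 2 - (s.map (· ^ 2)).sum := by
  induction s using Multiset.induction_on with
  | empty => simp [esymm, powersetCard_zero_right]
  | cons a s ih =>
    rw [esymm_cons_succ, esymm_one, sum_cons, map_cons, sum_cons]
    linear_combination ih

end Multiset

section Complement

variable {ι R : Type*} [Fintype ι] [DecidableEq ι] [CommRing R] (f : ι → R)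

theorem esymm_map_univ_eq_sum_prod_compl {j : ℕ} (hj : j ≤ Fintype.card ι) :
    (univ.val.map f).esymm j
      = ∑ u ∈ powersetCard (Fintype.card ι - j) univ, ∏ i ∈ uᶜ, f i := by
  rw [Finset.esymm_map_val]
  refine sum_nbij' (fun s => sᶜ) (fun u => uᶜ) ?_ ?_ (fun s _ => compl_compl s)
    (fun u _ => compl_compl u) (fun s _ => by rw [compl_compl])
  · intro s hs
    simp_all [card_compl]
  · intro u hu
    simp_all [card_compl, Nat.sub_sub_self hj]

theorem esymm_map_univ_card_sub_one (h : 0 < Fintype.card ι) :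
    (univ.val.map f).esymm (Fintype.card ι - 1) = ∑ i, ∏ t ∈ {i}ᶜ, f t := by
  rw [esymm_map_univ_eq_sum_prod_compl f (Nat.sub_le _ _), Nat.sub_sub_self h,
    powersetCard_one, sum_map]
  rfl

theorem esymm_map_univ_card : (univ.val.map f).esymm (Fintype.card ι) = ∏ i, f i := by
  rw [esymm_map_univ_eq_sum_prod_compl f le_rfl, Nat.sub_self, powersetCard_zero]
  simp

theorem esymm_map_univ_card_sub_two_mul_esymm_card (h : 2 ≤ Fintype.card ι) :
    (univ.val.map f).esymm (Fintype.card ι - 2) * (univ.val.map f).esymm (Fintype.card ι)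
      = (univ.val.map fun i => ∏ t ∈ {i}ᶜ, f t).esymm 2 := by
  rw [esymm_map_univ_eq_sum_prod_compl f (Nat.sub_le _ _), Nat.sub_sub_self h,
    esymm_map_univ_card, sum_mul, Finset.esymm_map_val]
  refine sum_congr rfl fun u hu => ?_
  obtain ⟨i, j, hij, rfl⟩ := card_eq_two.1 (mem_powersetCard.1 hu).2
  have hi : ({i}ᶜ : Finset ι) = insert j ({i, j} : Finset ι)ᶜ := by
    ext t; grind [mem_compl]
  have hj : ({j}ᶜ : Finset ι) = insert i ({i, j} : Finset ι)ᶜ := by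
    ext t; grind [mem_compl]
  rw [prod_pair hij, hi, hj, prod_insert (by simp), prod_insert (by simp),
    ← prod_mul_prod_compl {i, j} f, prod_pair hij]
  ring

end Complement

theorem esymm_map_univ_card_sub_two_mul_esymm_card_le {ι : Type*} [Fintype ι] [DecidableEq ι]
    (f : ι → ℝ) (h : 2 ≤ Fintype.card ι) :
    2 * Fintype.card ι * ((univ.val.map f).esymm (Fintype.card ι - 2)
        * (univ.val.map f).esymm (Fintype.card ι))
      ≤ (Fintype.card ι - 1) * (univ.val.map f).esymm (Fintype.card ι - 1) ^ 2 := by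
  set a : ι → ℝ := fun i => ∏ t ∈ {i}ᶜ, f t
  have hsum : (univ.val.map f).esymm (Fintype.card ι - 1) = (univ.val.map a).sum :=
    esymm_map_univ_card_sub_one f (by omega)
  have hcauchy :
      (univ.val.map a).sum ^ 2 ≤ Fintype.card ι * ((univ.val.map a).map (· ^ 2)).sum := by
    simpa [Multiset.map_map] using sq_sum_le_card_mul_sum_sq (s := univ) (f := a)
  have htwo := Multiset.two_mul_esymm_two (univ.val.map a)
  rw [esymm_map_univ_card_sub_two_mul_esymm_card f h, hsum]
  linear_combination (Fintype.card ι : ℝ) * htwo + hcauchy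

section DerivativeRoots

open Polynomial

namespace Multiset

noncomputable def derivRoots (s : Multiset ℝ) : Multiset ℝ :=
  (derivative (s.map fun a => X - C a).prod).roots

variable (s : Multiset ℝ)

theorem card_derivRoots : card s.derivRoots = card s - 1 := by
  set p := (s.map fun a => X - C a).prod
  have hp : p.natDegree = card s := natDegree_multiset_prod_X_sub_C_eq_card s
  have hrolle := card_roots_le_derivative p
  rw [roots_multiset_prod_X_sub_C] at hrolle
  change card (derivative p).roots = _
  refine le_antisymm ((card_roots' _).trans ((natDegree_derivative_le p).trans ?_)) ?_ <;> omega

theorem esymm_derivRoots {m : ℕ} (hs : card s = m + 1) {i : ℕ} (hi : i ≤ m) :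
    (m + 1 : ℝ) * s.derivRoots.esymm i = (m + 1 - i : ℕ) * s.esymm i := by
  set p := (s.map fun a => X - C a).prod
  set q := derivative p
  have hcard : card q.roots = m := by
    rw [show m = card s - 1 by omega]; exact s.card_derivRoots
  -- Vieta's formulas for `p` and for `q`, read off the coefficient of `X ^ (m - i)` in `q`.
  have hcoeff : ∀ k ≤ m, q.coeff k = (-1) ^ (m - k) * s.esymm (m - k) * (k + 1) := by
    intro k hk
    rw [coeff_derivative, prod_X_sub_C_coeff s (by omega), hs]
    congr 3 <;> omega
  have htop : q.coeff m = m + 1 := by simp [hcoeff m le_rfl, esymm]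
  have hq : q.natDegree = m :=
    le_antisymm ((natDegree_derivative_le p).trans
        (by rw [natDegree_multiset_prod_X_sub_C_eq_card, hs]; omega))
      (le_natDegree_of_ne_zero (by rw [htop]; positivity))
  have hvieta := coeff_eq_esymm_roots_of_card (hcard.trans hq.symm) (k := m - i) (by omega)
  rw [hcoeff _ (by omega), hq, leadingCoeff, hq, htop, Nat.sub_sub_self hi] at hvieta
  have hsign : ((-1 : ℝ) ^ i) ^ 2 = 1 := by rw [← pow_mul, mul_comm, pow_mul]; simp
  change (m + 1 : ℝ) * q.roots.esymm i = _
  rw [Nat.cast_sub (by omega)]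
  push_cast [Nat.cast_sub hi] at hvieta ⊢
  linear_combination (-(-1) ^ i) * hvieta
    - ((m + 1) * q.roots.esymm i - (m + 1 - i) * s.esymm i) * hsign

end Multiset

end DerivativeRoots

noncomputable def normalizedEsymm (s : Multiset ℝ) (i : ℕ) : ℝ :=
  s.esymm i / (Multiset.card s).choose i

theorem normalizedEsymm_derivRoots (s : Multiset ℝ) {i : ℕ} (hi : i < Multiset.card s) :
    normalizedEsymm s.derivRoots i = normalizedEsymm s i := by
  obtain ⟨m, hm⟩ : ∃ m, Multiset.card s = m + 1 := Nat.exists_eq_add_one.2 (by omega)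
  have hesymm := s.esymm_derivRoots hm (i := i) (by omega)
  have hchoose : (m.choose i * (m + 1) : ℝ) = (m + 1).choose i * (m + 1 - i : ℕ) := by
    exact_mod_cast Nat.choose_mul_succ_eq m i
  have hpos : (0 : ℝ) < (m + 1 - i : ℕ) := by exact_mod_cast (by omega : 0 < m + 1 - i)
  unfold normalizedEsymm
  rw [Multiset.card_derivRoots, hm, Nat.add_sub_cancel,
    div_eq_div_iff (by exact_mod_cast (Nat.choose_pos (by omega)).ne')
      (by exact_mod_cast (Nat.choose_pos (by omega)).ne')]
  refine mul_left_cancel₀ hpos.ne' ?_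
  linear_combination (m.choose i : ℝ) * hesymm - s.derivRoots.esymm i * hchoose

theorem normalizedEsymm_mul_le_sq_of_card_eq (s : Multiset ℝ) {j : ℕ}
    (hs : Multiset.card s = j + 2) :
    normalizedEsymm s j * normalizedEsymm s (j + 2) ≤ normalizedEsymm s (j + 1) ^ 2 := by
  have hmap : univ.val.map s.toList.get = s := by
    rw [Fin.univ_val_map, List.ofFn_get, Multiset.coe_toList]
  have hlen : Fintype.card (Fin s.toList.length) = j + 2 := by
    rw [Fintype.card_fin, Multiset.length_toList, hs]
  have h := esymm_map_univ_card_sub_two_mul_esymm_card_le s.toList.get (by omega)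
  rw [hmap, hlen, show j + 2 - 2 = j by omega, show j + 2 - 1 = j + 1 by omega] at h
  unfold normalizedEsymm
  rw [hs, Nat.choose_self, Nat.choose_succ_self_right, Nat.choose_symm_add, Nat.cast_choose_two]
  push_cast at h ⊢
  rw [show (j : ℝ) + 2 - 1 = j + 1 by ring] at h ⊢
  field_simp
  linear_combination ((j : ℝ) + 2) * h

theorem normalizedEsymm_mul_le_sq (s : Multiset ℝ) {j : ℕ} (hj : j + 2 ≤ Multiset.card s) :
    normalizedEsymm s j * normalizedEsymm s (j + 2) ≤ normalizedEsymm s (j + 1) ^ 2 := by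
  obtain ⟨d, hd⟩ := Nat.exists_eq_add_of_le hj
  induction d generalizing s with
  | zero => exact normalizedEsymm_mul_le_sq_of_card_eq s hd
  | succ d ih =>
    rw [← normalizedEsymm_derivRoots s (i := j) (by omega),
      ← normalizedEsymm_derivRoots s (i := j + 1) (by omega),
      ← normalizedEsymm_derivRoots s (i := j + 2) (by omega)]
    exact ih _ (by rw [Multiset.card_derivRoots]; omega) (by rw [Multiset.card_derivRoots]; omega)

theorem div_succ_le_of_mul_le_sq {E : ℕ → ℝ} {m : ℕ} (hpos : ∀ j ≤ m + 1, 0 < E j)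
    (hE : ∀ j < m, E j * E (j + 2) ≤ E (j + 1) ^ 2) {j : ℕ} (hj : j ≤ m) :
    E j / E (j + 1) ≤ E m / E (m + 1) := by
  induction hj using Nat.decreasingInduction with
  | self => exact le_rfl
  | of_succ k hk ih =>
    refine le_trans ?_ ih
    rw [div_le_div_iff₀ (hpos _ (by omega)) (hpos _ (by omega))]
    linarith [hE k hk]

theorem div_le_pow_of_mul_le_sq {E : ℕ → ℝ} {m : ℕ} (hpos : ∀ j ≤ m + 1, 0 < E j)
    (hE : ∀ j < m, E j * E (j + 2) ≤ E (j + 1) ^ 2) {l : ℕ} (hl : l ≤ m) :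
    E l / E m ≤ (E m / E (m + 1)) ^ (m - l) := by
  induction hl using Nat.decreasingInduction with
  | self => rw [div_self (hpos m (by omega)).ne', Nat.sub_self, pow_zero]
  | of_succ k hk ih =>
    have hratio := div_succ_le_of_mul_le_sq hpos hE hk.le
    have hpos' : ∀ j ≤ m + 1, ∀ j' ≤ m + 1, 0 ≤ E j / E j' := fun j hj j' hj' =>
      (div_pos (hpos j hj) (hpos j' hj')).le
    calc E k / E m = E k / E (k + 1) * (E (k + 1) / E m) := by
          rw [div_mul_div_cancel₀ (hpos _ (by omega)).ne']
      _ ≤ E m / E (m + 1) * (E m / E (m + 1)) ^ (m - (k + 1)) :=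
          mul_le_mul hratio ih (hpos' _ (by omega) _ (by omega)) (hpos' _ (by omega) _ le_rfl)
      _ = (E m / E (m + 1)) ^ (m - k) := by
          rw [← pow_succ', show m - (k + 1) + 1 = m - k by omega]

theorem normalizedEsymm_map_univ (n k : ℕ) (lam : Fin n → ℝ) :
    normalizedEsymm (univ.val.map lam) k = esymm n k lam / n.choose k := by
  rw [normalizedEsymm, Finset.esymm_map_val, Multiset.card_map, card_val, card_univ,
    Fintype.card_fin]
  rfl

theorem esymm_pos_of_mem_gammaCone {n k : ℕ} {lam : Fin n → ℝ} (hlam : lam ∈ GammaCone n k)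
    {j : ℕ} (hj : j ≤ k) : 0 < esymm n j lam := by
  rcases Nat.eq_zero_or_pos j with rfl | hj0
  · simp [esymm]
  · exact hlam j hj0 hj

theorem le_div_of_eq_sum_add {ι : Type*} {s : Finset ι} {β r : ι → ℝ} {x b : ℝ}
    (hnonneg : ∀ i ∈ s, 0 ≤ β i * r i) (hx : x ≤ 1) (heq : x = ∑ i ∈ s, β i * r i + b)
    {l : ι} (hl : l ∈ s) (hβl : 0 < β l) : r l ≤ (1 + |b|) / β l := by
  have hterm : β l * r l ≤ ∑ i ∈ s, β i * r i := single_le_sum hnonneg hl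
  rw [le_div_iff₀ hβl]
  linarith [neg_abs_le b]

theorem esymm_div_choose_div_le_two_pow {n m : ℕ} (hmn : m + 1 ≤ n) {lam : Fin n → ℝ}
    (hσ : 0 < esymm n m lam) (hlt : esymm n m lam < esymm n (m + 1) lam) :
    esymm n m lam / n.choose m / (esymm n (m + 1) lam / n.choose (m + 1)) ≤ 2 ^ n := by
  have hone_le : (1 : ℝ) ≤ n.choose m := by exact_mod_cast Nat.choose_pos (by omega)
  have hσ_div : esymm n m lam / esymm n (m + 1) lam ≤ 1 := (div_le_one (hσ.trans hlt)).2 hlt.le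
  have hchoose_div : (n.choose (m + 1) / n.choose m : ℝ) ≤ 2 ^ n :=
    (div_le_self (by positivity) hone_le).trans (by exact_mod_cast Nat.choose_le_two_pow n _)
  calc esymm n m lam / n.choose m / (esymm n (m + 1) lam / n.choose (m + 1))
      = esymm n m lam / esymm n (m + 1) lam * (n.choose (m + 1) / n.choose m) := by
        field_simp
    _ ≤ 1 * 2 ^ n := mul_le_mul hσ_div hchoose_div (by positivity) zero_le_one
    _ = 2 ^ n := one_mul _

theorem esymm_div_esymm_le_of_lt {n m : ℕ} (hmn : m + 1 ≤ n) {lam : Fin n → ℝ}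
    (hlam : lam ∈ GammaCone n m) (hlt : esymm n m lam < esymm n (m + 1) lam)
    {l : ℕ} (hl : l ≤ m) :
    esymm n l lam / esymm n m lam ≤ (2 ^ n) ^ (n + 1) := by
  set E : ℕ → ℝ := fun j => esymm n j lam / n.choose j
  have hchoose : ∀ j ≤ n, (0 : ℝ) < n.choose j := fun j hj => by
    exact_mod_cast Nat.choose_pos hj
  have hσ : ∀ j ≤ m, 0 < esymm n j lam := fun j hj => esymm_pos_of_mem_gammaCone hlam hj
  have hpos : ∀ j ≤ m + 1, 0 < E j := by
    intro j hj
    refine div_pos ?_ (hchoose j (by omega))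
    rcases Nat.lt_or_eq_of_le hj with hj | rfl
    exacts [hσ j (by omega), (hσ m le_rfl).trans hlt]
  have hE : ∀ j < m, E j * E (j + 2) ≤ E (j + 1) ^ 2 := fun j hj => by
    simpa only [E, normalizedEsymm_map_univ] using
      normalizedEsymm_mul_le_sq (univ.val.map lam) (j := j) (by simp; omega)
  have hpow : (E m / E (m + 1)) ^ (m - l) ≤ (2 ^ n) ^ n :=
    (pow_le_pow_left₀ (div_pos (hpos m (by omega)) (hpos _ le_rfl)).le
        (esymm_div_choose_div_le_two_pow hmn (hσ m le_rfl) hlt) _).trans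
      (pow_le_pow_right₀ (one_le_pow₀ one_le_two) (by omega))
  have hchoose_div : (n.choose l / n.choose m : ℝ) ≤ 2 ^ n :=
    (div_le_self (by positivity) (by exact_mod_cast Nat.choose_pos (by omega))).trans
      (by exact_mod_cast Nat.choose_le_two_pow n l)
  have hCl := (hchoose l (by omega)).ne'
  have hCm := (hchoose m (by omega)).ne'
  calc esymm n l lam / esymm n m lam = E l / E m * (n.choose l / n.choose m) := by
        simp only [E]; field_simp
    _ ≤ (2 ^ n) ^ n * 2 ^ n :=
        mul_le_mul ((div_le_pow_of_mul_le_sq hpos hE hl).trans hpow) hchoose_div (by positivity)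
          (by positivity)
    _ = (2 ^ n) ^ (n + 1) := (pow_succ _ _).symm

theorem ratio_bound_general (n k : ℕ) (hk : 2 ≤ k) (hkn : k ≤ n) :
    ∃ C > (0 : ℝ), ∀ lam ∈ GammaCone n (k - 1), ∀ β : ℕ → ℝ,
      (∀ l ≤ k - 2, 0 ≤ β l) → ∀ βlast : ℝ,
      esymm n k lam / esymm n (k - 1) lam
          = (∑ l ∈ Finset.range (k - 1), β l * (esymm n l lam / esymm n (k - 1) lam))
            + βlast →
      ∀ l ≤ k - 2, 0 < β l →
        0 < esymm n l lam / esymm n (k - 1) lam ∧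
        esymm n l lam / esymm n (k - 1) lam ≤ max ((1 + |βlast|) / β l) C := by
  obtain ⟨m, rfl⟩ : ∃ m, k = m + 1 := Nat.exists_eq_add_one.2 (by omega)
  refine ⟨(2 ^ n) ^ (n + 1), by positivity, fun lam hlam β hβ βlast heq l hl hβl => ?_⟩
  simp only [Nat.add_sub_cancel] at hlam heq
  have hσ : ∀ j ≤ m, 0 < esymm n j lam := fun j hj => esymm_pos_of_mem_gammaCone hlam hj
  refine ⟨div_pos (hσ l (by omega)) (hσ m le_rfl), ?_⟩
  rcases le_or_gt (esymm n (m + 1) lam) (esymm n m lam) with hle | hlt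
  · have hterm : ∀ i ∈ range m, 0 ≤ β i * (esymm n i lam / esymm n m lam) := fun i hi =>
      have hi := mem_range.1 hi
      mul_nonneg (hβ i (by omega)) (div_pos (hσ i (by omega)) (hσ m le_rfl)).le
    exact le_max_of_le_left (le_div_of_eq_sum_add hterm ((div_le_one (hσ m le_rfl)).2 hle) heq
      (mem_range.2 (by omega)) hβl)
  · exact le_max_of_le_right (esymm_div_esymm_le_of_lt (by omega) hlam hlt (by omega))

/-- Lemma 2.13, inequality (2.9): there is `C > 0` depending only on `n, k` such
that whenever `λ ∈ Γ_{k-1}` solves the equation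
`σ_k/σ_{k-1} = ∑_{l=0}^{k-2} β_l σ_l/σ_{k-1} + β_{k-1}` with `β_0, …, β_{k-2} ≥ 0`,
then each ratio `σ_l/σ_{k-1}` with `β_l > 0` is positive and bounded by
`max ((1 + |β_{k-1}|)/β_l) C`. -/
theorem ratio_bound (n k : ℕ) (hn : 2 ≤ n) (hk : 2 ≤ k) (hkn : k ≤ n) :
    ∃ C > (0 : ℝ), ∀ lam ∈ GammaCone n (k - 1), ∀ β : ℕ → ℝ,
      (∀ l ≤ k - 2, 0 ≤ β l) → ∀ βlast : ℝ,
      esymm n k lam / esymm n (k - 1) lam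
          = (∑ l ∈ Finset.range (k - 1), β l * (esymm n l lam / esymm n (k - 1) lam))
            + βlast →
      ∀ l ≤ k - 2, 0 < β l →
        0 < esymm n l lam / esymm n (k - 1) lam ∧
        esymm n l lam / esymm n (k - 1) lam ≤ max ((1 + |βlast|) / β l) C :=
  ratio_bound_general n k hk hkn
end
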